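/- Suppose X is a reflexive Banach space and Θ_j is weakly closed for every j ∈ J. Then for x̄ ∈ S and r ≥ 0, the following are equivalent: (a) x̄ is an optimal solution of the generalized Sylvester problem with radius r, i.e., Ω_i ⊆ x̄ + r•F for all i ∈ I, (x̄ + r•F) ∩ Θ_j ≠ ∅ for all j ∈ J, and for every x ∈ S and t ≥ 0 satisfying Ω_i ⊆ x + t•F for all i ∈ I and (x + t•F) ∩ Θ_j ≠ ∅ for all j ∈ J, one has r ≤ t; (b) x̄ minimizes G over S and r = G(x̄). -/

import Mathlib

/-!
As `F` is a closed bounded convex neighbourhood of `0`, `ρ_F` is its gauge and, for `t ≥ 0`,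
`x ∈ t • F ↔ ρ_F x ≤ t`. Hence `Ω ⊆ x + t • F ↔ C_F(x; Ω) ≤ t`, and
`(x + t • F) ∩ Θ ≠ ∅ ↔ T_F(x; Θ) ≤ t` as soon as the infimum defining `T_F(x; Θ)` is attained.
It is, by the direct method: the sublevel sets of `q ↦ ρ_F(q - x)` are translates of dilates of
`F`, so closed, convex and bounded, hence weakly closed and (the space being reflexive) weakly
compact. So `(x, t)` is feasible exactly when `G x ≤ t`, and the rest is order bookkeeping.
-/

open Set Pointwise Filter Topology Bornology Function

variable {X : Type*} [NormedAddCommGroup X] [NormedSpace ℝ X]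

/-- The Minkowski gauge of `F`: `ρ_F(x) = inf {t ≥ 0 : x ∈ t • F}`. -/
noncomputable def rhoF (F : Set X) (x : X) : ℝ :=
  sInf {t : ℝ | 0 ≤ t ∧ x ∈ t • F}

/-- The maximal time function `C_F(x; Q) = sup {ρ_F(q - x) : q ∈ Q}`. -/
noncomputable def maxTime (F Q : Set X) (x : X) : ℝ :=
  sSup ((fun q => rhoF F (q - x)) '' Q)

/-- The minimal time function `T_F(x; Θ) = inf {ρ_F(q - x) : q ∈ Θ}`. -/
noncomputable def minTime (F Θ : Set X) (x : X) : ℝ :=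
  sInf ((fun q => rhoF F (q - x)) '' Θ)

/-- `G(x) = max {C_F(x; Ω_i), T_F(x; Θ_j) : i ∈ I, j ∈ J}`. -/
noncomputable def GFun {ι κ : Type*} (F : Set X) (I : Finset ι) (J : Finset κ)
    (Ω : ι → Set X) (Θ : κ → Set X) (x : X) : ℝ :=
  sSup ((fun i => maxTime F (Ω i) x) '' ↑I ∪ (fun j => minTime F (Θ j) x) '' ↑J)

/-- `H(x) = Σ_{i∈I} C_F(x; Ω_i) + Σ_{j∈J} T_F(x; Θ_j)`. -/
noncomputable def HFun {ι κ : Type*} (F : Set X) (I : Finset ι) (J : Finset κ)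
    (Ω : ι → Set X) (Θ : κ → Set X) (x : X) : ℝ :=
  ∑ i ∈ I, maxTime F (Ω i) x + ∑ j ∈ J, minTime F (Θ j) x

/-- A set is weakly closed if it is closed in the weak topology on `Y`. -/
def WeaklyClosed (Y : Type*) [NormedAddCommGroup Y] [NormedSpace ℝ Y] (A : Set Y) : Prop :=
  IsClosed (toWeakSpace ℝ Y '' A)

/-- A normed space is reflexive if the canonical embedding into its double dual is surjective. -/
def IsReflexiveSpace (Y : Type*) [NormedAddCommGroup Y] [NormedSpace ℝ Y] : Prop :=
  Function.Surjective (NormedSpace.inclusionInDoubleDual ℝ Y)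

lemma mem_singleton_add_iff_sub_mem {G : Type*} [AddCommGroup G] {x q : G} {s : Set G} :
    q ∈ ({x} : Set G) + s ↔ q - x ∈ s := by
  rw [singleton_add, mem_image]
  exact ⟨by rintro ⟨y, hy, rfl⟩; simpa using hy, fun h => ⟨q - x, h, add_sub_cancel x q⟩⟩

lemma rhoF_nonneg (F : Set X) (x : X) : 0 ≤ rhoF F x :=
  Real.sInf_nonneg fun _ ht => ht.1

lemma maxTime_nonneg (F Q : Set X) (x : X) : 0 ≤ maxTime F Q x :=
  Real.sSup_nonneg <| forall_mem_image.2 fun _ _ => rhoF_nonneg F _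

lemma minTime_nonneg (F Θ : Set X) (x : X) : 0 ≤ minTime F Θ x :=
  Real.sInf_nonneg <| forall_mem_image.2 fun _ _ => rhoF_nonneg F _

lemma rhoF_eq_gauge {F : Set X} (hF : F.Nonempty) : rhoF F = gauge F := by
  funext x
  rcases eq_or_ne x 0 with rfl | hx
  · rw [gauge_zero]
    refine le_antisymm (csInf_le ⟨0, fun _ ht => ht.1⟩ ⟨le_rfl, ?_⟩) (rhoF_nonneg F 0)
    rw [zero_smul_set hF]; rfl
  · -- `t = 0` is excluded from the defining set of `rhoF F x` anyway, since `0 • F = {0}`.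
    unfold rhoF gauge
    congr 1
    ext t
    refine ⟨fun ⟨ht, hxt⟩ => ⟨ht.lt_of_ne ?_, hxt⟩, fun ⟨ht, hxt⟩ => ⟨ht.le, hxt⟩⟩
    rintro rfl
    rw [zero_smul_set hF] at hxt
    exact hx hxt

lemma weaklyClosed_of_isClosed_of_convex {A : Set X} (hAc : IsClosed A) (hA : Convex ℝ A) :
    WeaklyClosed X A := by
  rw [WeaklyClosed, ← hAc.closure_eq, hA.toWeakSpace_closure ℝ]
  exact isClosed_closure

lemma WeaklyClosed.inter {A B : Set X} (hA : WeaklyClosed X A) (hB : WeaklyClosed X B) :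
    WeaklyClosed X (A ∩ B) := by
  rw [WeaklyClosed, image_inter (toWeakSpace ℝ X).injective]
  exact IsClosed.inter hA hB

theorem IsReflexiveSpace.isCompact_toWeakSpace_image (hX : IsReflexiveSpace X) {A : Set X}
    (hAw : WeaklyClosed X A) (hAb : IsBounded A) : IsCompact (toWeakSpace ℝ X '' A) := by
  rw [← hAw.closure_eq]
  refine NormedSpace.isCompact_closure_of_isBounded ℝ X _ ?_ fun φ _ => ?_
  · rwa [preimage_image_eq _ (toWeakSpace ℝ X).injective]
  · obtain ⟨x, hx⟩ := hX (WeakDual.toStrongDual φ)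
    exact ⟨toWeakSpace ℝ X x, DFunLike.ext _ _ fun f => DFunLike.congr_fun hx f⟩

theorem IsReflexiveSpace.exists_isMinOn (hX : IsReflexiveSpace X) {f : X → ℝ}
    (hfw : ∀ c, WeaklyClosed X {y | f y ≤ c}) (hfb : ∀ c, IsBounded {y | f y ≤ c})
    {A : Set X} (hAw : WeaklyClosed X A) (hA : A.Nonempty) : ∃ a ∈ A, IsMinOn f A a := by
  obtain ⟨a₀, ha₀⟩ := hA
  set B := A ∩ {y | f y ≤ f a₀}
  have hlsc : LowerSemicontinuous (f ∘ (toWeakSpace ℝ X).symm) := by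
    refine lowerSemicontinuous_iff_isClosed_preimage.2 fun c => ?_
    rw [preimage_comp, ← LinearEquiv.image_eq_preimage_symm]
    exact hfw c
  obtain ⟨_, ⟨b, hb, rfl⟩, hmin⟩ := LowerSemicontinuousOn.exists_isMinOn
    ⟨_, mem_image_of_mem (toWeakSpace ℝ X) (⟨ha₀, mem_ofPred.2 le_rfl⟩ : a₀ ∈ B)⟩
    (hX.isCompact_toWeakSpace_image (hAw.inter (hfw _)) ((hfb _).subset inter_subset_right))
    (hlsc.lowerSemicontinuousOn _)
  refine ⟨b, hb.1, fun a ha => ?_⟩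
  by_cases hfa : f a ≤ f a₀
  · simpa using hmin (mem_image_of_mem _ (⟨ha, hfa⟩ : a ∈ B))
  · exact hb.2.trans (le_of_not_ge hfa)

lemma bddAbove_gauge_sub_image {F : Set X} (hF0 : F ∈ 𝓝 0) {A : Set X} (hA : IsBounded A)
    (x : X) : BddAbove ((fun q => gauge F (q - x)) '' A) := by
  obtain ⟨ε, hε, hball⟩ := Metric.mem_nhds_iff.1 hF0
  obtain ⟨R, hR⟩ := isBounded_iff_forall_norm_le.1 hA
  refine ⟨(R + ‖x‖) / ε, forall_mem_image.2 fun q hq => ?_⟩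
  rw [le_div_iff₀ hε, mul_comm]
  calc ε * gauge F (q - x) ≤ ‖q - x‖ := mul_gauge_le_norm hball
    _ ≤ ‖q‖ + ‖x‖ := norm_sub_le q x
    _ ≤ R + ‖x‖ := by linarith [hR q hq]

section Gauge

variable {F : Set X} (hFc : IsClosed F) (hFb : IsBounded F) (hFconv : Convex ℝ F)
  (hF0 : F ∈ 𝓝 0)
include hFc hFb hFconv hF0

lemma gauge_le_iff_mem_smul {x : X} {t : ℝ} (ht : 0 ≤ t) : gauge F x ≤ t ↔ x ∈ t • F := by
  rcases ht.eq_or_lt with rfl | ht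
  · rw [zero_smul_set (Filter.nonempty_of_mem hF0), Set.mem_zero, ← gauge_eq_zero
      (absorbent_nhds_zero hF0) ((NormedSpace.isVonNBounded_iff ℝ).2 hFb)]
    exact ⟨fun h => le_antisymm h (gauge_nonneg x), le_of_eq⟩
  · have key := gauge_le_one_iff_mem_closure hFconv hF0 (x := t⁻¹ • x)
    rw [hFc.closure_eq] at key
    rw [mem_smul_set_iff_inv_smul_mem₀ ht.ne', ← key, gauge_smul_of_nonneg (inv_nonneg.2 ht.le),
      smul_eq_mul, inv_mul_le_iff₀ ht, mul_one]

lemma gauge_sub_le_iff_mem_singleton_add {x q : X} {t : ℝ} (ht : 0 ≤ t) :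
    gauge F (q - x) ≤ t ↔ q ∈ ({x} : Set X) + t • F := by
  rw [mem_singleton_add_iff_sub_mem, gauge_le_iff_mem_smul hFc hFb hFconv hF0 ht]

lemma maxTime_le_iff {Ω : Set X} (hΩb : IsBounded Ω) {x : X} {t : ℝ} (ht : 0 ≤ t) :
    maxTime F Ω x ≤ t ↔ Ω ⊆ ({x} : Set X) + t • F := by
  simp_rw [maxTime, rhoF_eq_gauge (Filter.nonempty_of_mem hF0), subset_def,
    ← gauge_sub_le_iff_mem_singleton_add hFc hFb hFconv hF0 ht]
  refine ⟨fun h q hq => (le_csSup (bddAbove_gauge_sub_image hF0 hΩb x) ⟨q, hq, rfl⟩).trans h,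
    fun h => Real.sSup_le (forall_mem_image.2 h) ht⟩

lemma weaklyClosed_setOf_gauge_sub_le (x : X) (c : ℝ) :
    WeaklyClosed X {q | gauge F (q - x) ≤ c} := by
  rcases lt_or_ge c 0 with hc | hc
  · have : {q | gauge F (q - x) ≤ c} = ∅ :=
      eq_empty_of_forall_notMem fun q hq => (gauge_nonneg (q - x)).not_gt (lt_of_le_of_lt hq hc)
    simp [this, WeaklyClosed]
  · refine weaklyClosed_of_isClosed_of_convex
      (isClosed_le ((continuous_gauge hFconv hF0).comp (continuous_sub_right x))
        continuous_const) ?_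
    have : {q | gauge F (q - x) ≤ c} = {x} + c • F :=
      ext fun _ => gauge_sub_le_iff_mem_singleton_add hFc hFb hFconv hF0 hc
    exact this ▸ (convex_singleton x).add (hFconv.smul c)

lemma isBounded_setOf_gauge_sub_le (x : X) (c : ℝ) :
    IsBounded {q | gauge F (q - x) ≤ c} :=
  (isBounded_singleton.add (hFb.smul₀ (max c 0))).subset fun _ hq =>
    (gauge_sub_le_iff_mem_singleton_add hFc hFb hFconv hF0 (le_max_right c 0)).1
      (le_max_of_le_left hq)

lemma minTime_le_iff (hX : IsReflexiveSpace X) {Θ : Set X} (hΘw : WeaklyClosed X Θ)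
    (hΘ : Θ.Nonempty) {x : X} {t : ℝ} (ht : 0 ≤ t) :
    minTime F Θ x ≤ t ↔ ((({x} : Set X) + t • F) ∩ Θ).Nonempty := by
  rw [minTime, rhoF_eq_gauge (Filter.nonempty_of_mem hF0)]
  have hbdd : BddBelow ((fun q => gauge F (q - x)) '' Θ) :=
    ⟨0, forall_mem_image.2 fun q _ => gauge_nonneg (q - x)⟩
  constructor
  · obtain ⟨q, hq, hmin⟩ := hX.exists_isMinOn
      (weaklyClosed_setOf_gauge_sub_le hFc hFb hFconv hF0 x)
      (isBounded_setOf_gauge_sub_le hFc hFb hFconv hF0 x) hΘw hΘ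
    have hleast : IsLeast ((fun q => gauge F (q - x)) '' Θ) (gauge F (q - x)) :=
      ⟨mem_image_of_mem _ hq, forall_mem_image.2 (isMinOn_iff.1 hmin)⟩
    rw [hleast.csInf_eq]
    exact fun h => ⟨q, (gauge_sub_le_iff_mem_singleton_add hFc hFb hFconv hF0 ht).1 h, hq⟩
  · rintro ⟨q, hqx, hqΘ⟩
    exact (csInf_le hbdd (mem_image_of_mem _ hqΘ)).trans
      ((gauge_sub_le_iff_mem_singleton_add hFc hFb hFconv hF0 ht).2 hqx)

end Gauge

section Sylvester

variable {ι κ : Type*} (F : Set X) (I : Finset ι) (J : Finset κ) (Ω : ι → Set X)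
  (Θ : κ → Set X)

lemma GFun_nonneg (x : X) : 0 ≤ GFun F I J Ω Θ x := by
  refine Real.sSup_nonneg ?_
  rintro _ (⟨i, -, rfl⟩ | ⟨j, -, rfl⟩)
  exacts [maxTime_nonneg _ _ x, minTime_nonneg _ _ x]

lemma GFun_le_iff {x : X} {t : ℝ} (ht : 0 ≤ t) :
    GFun F I J Ω Θ x ≤ t ↔
      (∀ i ∈ I, maxTime F (Ω i) x ≤ t) ∧ ∀ j ∈ J, minTime F (Θ j) x ≤ t := by
  have hfin : BddAbove
      ((fun i => maxTime F (Ω i) x) '' ↑I ∪ (fun j => minTime F (Θ j) x) '' ↑J) :=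
    ((I.finite_toSet.image _).union (J.finite_toSet.image _)).bddAbove
  have hsub : GFun F I J Ω Θ x ≤ t ↔ _ ⊆ Iic t :=
    ⟨fun h _ hb => (le_csSup hfin hb).trans h, fun h => Real.sSup_le h ht⟩
  rw [hsub, union_subset_iff, image_subset_iff, image_subset_iff]
  rfl

end Sylvester

lemma minimal_feasible_radius_iff {α : Type*} {S : Set α} {g : α → ℝ} {P Q : α → ℝ → Prop}
    (hg : ∀ x t, 0 ≤ t → (g x ≤ t ↔ P x t ∧ Q x t)) (hg0 : ∀ x, 0 ≤ g x)
    {xbar : α} (hxbar : xbar ∈ S) {r : ℝ} (hr : 0 ≤ r) :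
    (P xbar r ∧ Q xbar r ∧ ∀ x ∈ S, ∀ t, 0 ≤ t → P x t → Q x t → r ≤ t) ↔
      (∀ x ∈ S, g xbar ≤ g x) ∧ r = g xbar := by
  constructor
  · rintro ⟨hP, hQ, hmin⟩
    have hr_le : ∀ x ∈ S, r ≤ g x := fun x hx =>
      let ⟨hPx, hQx⟩ := (hg x _ (hg0 x)).1 le_rfl
      hmin x hx _ (hg0 x) hPx hQx
    have hr_eq : r = g xbar := le_antisymm (hr_le xbar hxbar) ((hg xbar r hr).2 ⟨hP, hQ⟩)
    exact ⟨fun x hx => hr_eq ▸ hr_le x hx, hr_eq⟩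
  · rintro ⟨hmin, rfl⟩
    obtain ⟨hP, hQ⟩ := (hg xbar _ hr).1 le_rfl
    exact ⟨hP, hQ, fun x hx t ht hPx hQx => (hmin x hx).trans ((hg x t ht).2 ⟨hPx, hQx⟩)⟩

theorem stmt5_general
    {ι κ : Type*} (F : Set X) (I : Finset ι) (J : Finset κ)
    (Ω : ι → Set X) (Θ : κ → Set X) (S : Set X)
    (hFc : IsClosed F) (hFb : IsBounded F) (hFconv : Convex ℝ F)
    (hF0 : (0 : X) ∈ interior F)
    (hΩb : ∀ i ∈ I, IsBounded (Ω i))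
    (hΘne : ∀ j ∈ J, (Θ j).Nonempty)
    (hrefl : IsReflexiveSpace X) (hΘw : ∀ j ∈ J, WeaklyClosed X (Θ j))
    (xbar : X) (hxbar : xbar ∈ S) (r : ℝ) (hr : 0 ≤ r) :
    ((∀ i ∈ I, Ω i ⊆ ({xbar} : Set X) + r • F) ∧
      (∀ j ∈ J, ((({xbar} : Set X) + r • F) ∩ Θ j).Nonempty) ∧
      (∀ x ∈ S, ∀ t : ℝ, 0 ≤ t → (∀ i ∈ I, Ω i ⊆ ({x} : Set X) + t • F) →
        (∀ j ∈ J, ((({x} : Set X) + t • F) ∩ Θ j).Nonempty) → r ≤ t)) ↔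
    ((∀ x ∈ S, GFun F I J Ω Θ xbar ≤ GFun F I J Ω Θ x) ∧ r = GFun F I J Ω Θ xbar) := by
  have hF : F ∈ 𝓝 0 := mem_interior_iff_mem_nhds.1 hF0
  refine minimal_feasible_radius_iff (P := fun x t => ∀ i ∈ I, Ω i ⊆ ({x} : Set X) + t • F)
    (Q := fun x t => ∀ j ∈ J, ((({x} : Set X) + t • F) ∩ Θ j).Nonempty) (fun x t ht => ?_)
    (GFun_nonneg F I J Ω Θ) hxbar hr
  rw [GFun_le_iff F I J Ω Θ ht]
  exact and_congr (forall₂_congr fun i hi => maxTime_le_iff hFc hFb hFconv hF (hΩb i hi) ht)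
    (forall₂_congr fun j hj => minTime_le_iff hFc hFb hFconv hF hrefl (hΘw j hj) (hΘne j hj) ht)

/-- Proposition 2.6. -/
theorem stmt5 [CompleteSpace X]
    {ι κ : Type*} (F : Set X) (I : Finset ι) (J : Finset κ)
    (Ω : ι → Set X) (Θ : κ → Set X) (S : Set X)
    (hFc : IsClosed F) (hFb : IsBounded F) (hFconv : Convex ℝ F)
    (hF0 : (0 : X) ∈ interior F)
    (hΩne : ∀ i ∈ I, (Ω i).Nonempty) (hΩc : ∀ i ∈ I, IsClosed (Ω i))
    (hΩb : ∀ i ∈ I, IsBounded (Ω i))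
    (hΘne : ∀ j ∈ J, (Θ j).Nonempty) (hΘc : ∀ j ∈ J, IsClosed (Θ j))
    (hSne : S.Nonempty) (hSc : IsClosed S)
    (hIJ : I.Nonempty ∨ J.Nonempty)
    (hrefl : IsReflexiveSpace X) (hΘw : ∀ j ∈ J, WeaklyClosed X (Θ j))
    (xbar : X) (hxbar : xbar ∈ S) (r : ℝ) (hr : 0 ≤ r) :
    ((∀ i ∈ I, Ω i ⊆ ({xbar} : Set X) + r • F) ∧
      (∀ j ∈ J, ((({xbar} : Set X) + r • F) ∩ Θ j).Nonempty) ∧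
      (∀ x ∈ S, ∀ t : ℝ, 0 ≤ t → (∀ i ∈ I, Ω i ⊆ ({x} : Set X) + t • F) →
        (∀ j ∈ J, ((({x} : Set X) + t • F) ∩ Θ j).Nonempty) → r ≤ t)) ↔
    ((∀ x ∈ S, GFun F I J Ω Θ xbar ≤ GFun F I J Ω Θ x) ∧ r = GFun F I J Ω Θ xbar) :=
  stmt5_general F I J Ω Θ S hFc hFb hFconv hF0 hΩb hΘne hrefl hΘw xbar hxbar r hr
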